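/- arXiv:2605.31237 — 2 statements merged into one kernel-verified Lean document; each statement's English description precedes it below -/
import Mathlib

section
/- For all y, z : ℤ → {0,1}, the image of g_{y,z} equals ℤ² minus the set of points of the form g_{y,z}(a,b) + (1,0) with y_a = 1 and z_b = 1. That is, g_{y,z}(ℤ²) = ℤ² \ { g_{y,z}(a,b) + (1,0) : (a,b) ∈ ℤ², y_a = z_b = 1 }. -/
/-- Signed sum of `f` over the integer interval `[0, b)` (negated if `b < 0`). -/
noncomputable def sgnSum (f : ℤ → ℤ) (b : ℤ) : ℤ :=
  (∑ k ∈ Finset.Ico (0 : ℤ) b, f k) - (∑ k ∈ Finset.Ico b (0 : ℤ), f k)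

/-- The wobbling map `g_{y,z}(a,b) = (a + Σ z over [0,b), b - Σ y over [0,a))`. -/
noncomputable def gfun (y z : ℤ → ℤ) (p : ℤ × ℤ) : ℤ × ℤ :=
  (p.1 + sgnSum z p.2, p.2 - sgnSum y p.1)

/-!
Write `Y = sgnSum y`, `Z = sgnSum z` and fix a target `p = (u, v)`. Since the first coordinate
of `g(a, b)` is `a + Z(b)`, the only candidate preimage of `p` with second coordinate `b` is
`(u - Z(b), b)`, and it is a preimage exactly when the defect `d(b) := b - Y(u - Z(b)) - v`
vanishes. Going from `b` to `b + 1` the defect grows by `1 + z_b y_{u - Z(b) - 1} ∈ {1, 2}`.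
A strictly increasing integer sequence misses `0` exactly when it jumps over it, and with steps
of size at most `2` such a jump is a step of size `2` from `d(b) = -1`; unwinding the
definitions, this says `p = g(a, b) + (1, 0)` with `a = u - Z(b) - 1` and `y_a = z_b = 1`.
-/

lemma sgnSum_add_one (f : ℤ → ℤ) (b : ℤ) : sgnSum f (b + 1) = sgnSum f b + f b := by
  unfold sgnSum
  rcases le_or_gt 0 b with hb | hb
  · rw [← Finset.insert_Ico_right_eq_Ico_add_one hb, Finset.sum_insert (by simp),
      Finset.Ico_eq_empty_of_le hb, Finset.Ico_eq_empty_of_le (by omega : (0 : ℤ) ≤ b + 1)]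
    simp only [Finset.sum_empty]
    ring
  · rw [← Finset.insert_Ico_add_one_left_eq_Ico hb, Finset.sum_insert (by simp),
      Finset.Ico_eq_empty_of_le hb.le, Finset.Ico_eq_empty_of_le (by omega : b + 1 ≤ (0 : ℤ))]
    simp only [Finset.sum_empty]
    ring

lemma Int.add_sub_le_of_strictMono {ψ : ℤ → ℤ} (hψ : StrictMono ψ) {a b : ℤ}
    (hab : a ≤ b) : ψ a + (b - a) ≤ ψ b := by
  induction b, hab using Int.leInduction with
  | base => simp
  | succ n _ ih => have := hψ (lt_add_one n); omega

lemma Int.exists_eq_iff_not_exists_skip_of_strictMono {ψ : ℤ → ℤ} (hψ : StrictMono ψ)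
    (t : ℤ) : (∃ b, ψ b = t) ↔ ¬ ∃ b, ψ b < t ∧ t < ψ (b + 1) := by
  constructor
  · rintro ⟨c, rfl⟩ ⟨b, hb, hb'⟩
    rcases le_or_gt c b with h | h
    · exact (hψ.monotone h).not_gt hb
    · exact (hψ.monotone (Int.add_one_le_of_lt h)).not_gt hb'
  · intro hskip
    have hbdd : ∃ B, ∀ c, ψ c < t → c ≤ B := by
      refine ⟨max 0 (t - ψ 0), fun c hc => ?_⟩
      by_contra! h
      have := Int.add_sub_le_of_strictMono hψ (show 0 ≤ c by omega)
      omega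
    have hne : ∃ c, ψ c < t := by
      refine ⟨min 0 (t - ψ 0) - 1, ?_⟩
      have := Int.add_sub_le_of_strictMono hψ (show min 0 (t - ψ 0) - 1 ≤ 0 by omega)
      omega
    obtain ⟨b, hb, hmax⟩ := Int.exists_greatest_of_bdd hbdd hne
    have hb' : t ≤ ψ (b + 1) := not_lt.mp fun h => by have := hmax _ h; omega
    exact ⟨b + 1, (hb'.eq_or_lt.resolve_right fun h => hskip ⟨b, hb, h⟩).symm⟩

noncomputable def gfunDefect (y z : ℤ → ℤ) (p : ℤ × ℤ) (b : ℤ) : ℤ :=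
  (gfun y z (p.1 - sgnSum z b, b)).2 - p.2

section

variable {y z : ℤ → ℤ} {p : ℤ × ℤ}

lemma mem_range_gfun_iff : p ∈ Set.range (gfun y z) ↔ ∃ b, gfunDefect y z p b = 0 := by
  constructor
  · rintro ⟨⟨a, b⟩, rfl⟩
    exact ⟨b, by simp [gfunDefect, gfun]⟩
  · rintro ⟨b, hb⟩
    refine ⟨(p.1 - sgnSum z b, b), Prod.ext (by simp [gfun]) ?_⟩
    simp only [gfunDefect] at hb
    omega

lemma exists_gfun_add_iff :
    (∃ a b, y a = 1 ∧ z b = 1 ∧ p = gfun y z (a, b) + (1, 0)) ↔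
      ∃ b, z b = 1 ∧ y (p.1 - sgnSum z b - 1) = 1 ∧ gfunDefect y z p b = -1 := by
  constructor
  · rintro ⟨a, b, ha, hb, rfl⟩
    have hY := sgnSum_add_one y a
    refine ⟨b, hb, ?_, ?_⟩
    · convert ha using 2
      simp only [gfun, Prod.fst_add]
      ring
    simp only [gfunDefect, gfun, Prod.fst_add, Prod.snd_add]
    rw [show a + sgnSum z b + 1 - sgnSum z b = a + 1 by ring]
    omega
  · rintro ⟨b, hb, ha, hd⟩
    refine ⟨_, b, ha, hb, Prod.ext (by simp only [gfun, Prod.fst_add]; ring) ?_⟩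
    have hY := sgnSum_add_one y (p.1 - sgnSum z b - 1)
    simp only [gfunDefect, gfun, sub_add_cancel] at hd hY
    simp only [gfun, Prod.snd_add]
    omega

lemma gfunDefect_add_one (hz : ∀ k, z k = 0 ∨ z k = 1) (b : ℤ) :
    gfunDefect y z p (b + 1) = gfunDefect y z p b + 1 + z b * y (p.1 - sgnSum z b - 1) := by
  have hY := sgnSum_add_one y (p.1 - sgnSum z b - 1)
  simp only [gfunDefect, gfun, sgnSum_add_one z b, sub_add_cancel] at hY ⊢
  rcases hz b with h | h
  · rw [h, add_zero, zero_mul, add_zero]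
    ring
  · rw [h, one_mul, sub_add_eq_sub_sub]
    omega

variable (hy : ∀ k, y k = 0 ∨ y k = 1) (hz : ∀ k, z k = 0 ∨ z k = 1)
include hy hz

lemma strictMono_gfunDefect : StrictMono (gfunDefect y z p) := by
  refine strictMono_int_of_lt_succ fun b => ?_
  rw [gfunDefect_add_one hz]
  rcases hz b with h | h <;> rcases hy (p.1 - sgnSum z b - 1) with h' | h' <;>
    simp only [h, h'] <;> omega

lemma gfunDefect_skip_iff (b : ℤ) :
    gfunDefect y z p b < 0 ∧ 0 < gfunDefect y z p (b + 1) ↔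
      z b = 1 ∧ y (p.1 - sgnSum z b - 1) = 1 ∧ gfunDefect y z p b = -1 := by
  rw [gfunDefect_add_one hz]
  rcases hz b with h | h <;> rcases hy (p.1 - sgnSum z b - 1) with h' | h' <;>
    simp only [h, h', true_and] <;> omega

end

theorem gfun_range (y z : ℤ → ℤ)
    (hy : ∀ k, y k = 0 ∨ y k = 1) (hz : ∀ k, z k = 0 ∨ z k = 1) :
    Set.range (gfun y z)
      = Set.univ \
        {v : ℤ × ℤ | ∃ a b : ℤ, y a = 1 ∧ z b = 1 ∧ v = gfun y z (a, b) + (1, 0)} := by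
  ext p
  rw [Set.mem_sdiff, Set.mem_ofPred_eq, mem_range_gfun_iff, exists_gfun_add_iff,
    Int.exists_eq_iff_not_exists_skip_of_strictMono (strictMono_gfunDefect hy hz) 0]
  simp only [Set.mem_univ, true_and, gfunDefect_skip_iff hy hz]
end

section
/- Suppose X is a ℤ² subshift whose block gluing function B satisfies B(n) < ∞ for all n, and X contains at least two distinct globally valid 1×1 patterns (i.e. at least two symbols occur in X). Then the topological entropy of X in the case B(n) = O(1) is strictly positive: if B(n) ≤ C for all n, then h(X) ≥ log 2 / (1 + C)². -/
open Filter

section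

variable {A : Type*}

/-- `p` is a globally valid `ℓ × ℓ` pattern of `X`. -/
def globallyValid (X : Set (ℤ × ℤ → A)) (p : ℤ × ℤ → A) (ℓ : ℕ) : Prop :=
  ∃ x ∈ X, ∀ u : ℤ × ℤ, 0 ≤ u.1 → u.1 < ℓ → 0 ≤ u.2 → u.2 < ℓ → x u = p u

/-- The configuration `x` contains the `ℓ × ℓ` pattern `p` at position `w`. -/
def containsAt (x : ℤ × ℤ → A) (p : ℤ × ℤ → A) (ℓ : ℕ) (w : ℤ × ℤ) : Prop :=
  ∀ u : ℤ × ℤ, 0 ≤ u.1 → u.1 < ℓ → 0 ≤ u.2 → u.2 < ℓ → x (u + w) = p u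

/-- Number of globally valid `k × k` patterns of `X`. -/
noncomputable def patternCount (X : Set ((ℤ × ℤ) → A)) (k : ℕ) : ℕ :=
  Nat.card {p : Fin k × Fin k → A //
    ∃ x ∈ X, ∀ ij : Fin k × Fin k, x ((ij.1 : ℤ), (ij.2 : ℤ)) = p ij}

end

/-!
With spacing `s = 1 + C`, the sites of the lattice `s • ℤ²` can be filled with symbols
independently. Two `m × m` blocks of sites fit into square windows of side `s * m - C` lying `C`
apart, so block gluing joins any two realisations of them; doubling horizontally and then
vertically realises every assignment of symbols to the `2ᵗ × 2ᵗ` block of sites. That block lies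
in a square of side `s * 2ᵗ`, which therefore carries at least `|Σ| ^ (4 ^ t) ≥ 2 ^ (4 ^ t)`
patterns, `Σ` being the set of symbols, so the entropy is at least `log |Σ| / s² ≥ log 2 / s²`.
-/

theorem logb_div_sq_le_of_pow_le {b N s : ℝ} {m : ℕ} (hb : 0 < b) (hs : 0 < s) (hm : 0 < m)
    (h : b ^ (m * m) ≤ N) : Real.logb 2 b / s ^ 2 ≤ Real.logb 2 N / (s * m) ^ 2 := by
  have hlog : (m * m : ℝ) * Real.logb 2 b ≤ Real.logb 2 N := by
    calc (m * m : ℝ) * Real.logb 2 b = Real.logb 2 (b ^ (m * m)) := by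
          rw [Real.logb_pow]; push_cast; ring
      _ ≤ Real.logb 2 N := Real.logb_le_logb_of_le (by norm_num) (by positivity) h
  calc Real.logb 2 b / s ^ 2 = (m * m : ℝ) * Real.logb 2 b / (s * m) ^ 2 := by
        field_simp
    _ ≤ Real.logb 2 N / (s * m) ^ 2 := by gcongr

section Subshift

variable {A : Type*} (X : Set (ℤ × ℤ → A))

def IsShiftInvariant : Prop :=
  ∀ v : ℤ × ℤ, ∀ x ∈ X, (fun u => x (u + v)) ∈ X

def IsBlockGluing (C : ℕ) : Prop :=
  ∀ n : ℕ, 1 ≤ n → ∀ p q : ℤ × ℤ → A,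
    globallyValid X p n → globallyValid X q n →
    ∀ v : ℤ × ℤ, ((n : ℤ) + C ≤ |v.1| ∨ (n : ℤ) + C ≤ |v.2|) →
      ∃ x ∈ X, containsAt x p n (0, 0) ∧ containsAt x q n v

def symbols : Set A :=
  (fun x => x 0) '' X

def rect (a b : ℕ) : Set (ℤ × ℤ) :=
  Set.Ico 0 (a : ℤ) ×ˢ Set.Ico 0 (b : ℤ)

def IsFreeGrid (s : ℤ) (I : Set (ℤ × ℤ)) : Prop :=
  ∀ f : ℤ × ℤ → symbols X, ∃ x ∈ X, ∀ u ∈ I, x (s • u) = f u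

variable {X}

theorem globallyValid_of_mem {x : ℤ × ℤ → A} (hx : x ∈ X) (n : ℕ) : globallyValid X x n :=
  ⟨x, hx, fun _ _ _ _ _ => rfl⟩

theorem containsAt.eq_of_mem_rect {x p : ℤ × ℤ → A} {n : ℕ} {w u : ℤ × ℤ}
    (h : containsAt x p n w) (hu : u ∈ rect n n) : x (u + w) = p u :=
  h u hu.1.1 hu.1.2 hu.2.1 hu.2.2

theorem isFreeGrid_rect_one_one (s : ℤ) : IsFreeGrid X s (rect 1 1) := by
  intro f
  obtain ⟨x, hx, hx0⟩ := (f 0).2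
  refine ⟨x, hx, fun ⟨i, j⟩ hu => ?_⟩
  obtain ⟨rfl, rfl⟩ : i = 0 ∧ j = 0 := by
    simp only [rect, Set.mem_prod, Set.mem_Ico, Nat.cast_one] at hu
    omega
  simpa [Prod.mk_zero_zero] using hx0

theorem IsFreeGrid.preimage_add (hinv : IsShiftInvariant X) {s : ℤ} {I : Set (ℤ × ℤ)}
    (hI : IsFreeGrid X s I) (w : ℤ × ℤ) : IsFreeGrid X s ((· + w) ⁻¹' I) := by
  intro f
  obtain ⟨x, hx, hxf⟩ := hI fun u => f (u - w)
  refine ⟨fun u => x (u + s • w), hinv _ x hx, fun u hu => ?_⟩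
  simpa [smul_add] using hxf _ hu

theorem IsFreeGrid.union (hinv : IsShiftInvariant X) {C : ℕ} (hglue : IsBlockGluing X C)
    {s : ℤ} {I J : Set (ℤ × ℤ)} (hI : IsFreeGrid X s I) (hJ : IsFreeGrid X s J)
    {n : ℕ} (hn : 1 ≤ n) {v : ℤ × ℤ} (hv : (n : ℤ) + C ≤ |v.1| ∨ (n : ℤ) + C ≤ |v.2|)
    (hIn : ∀ u ∈ I, s • u ∈ rect n n) (hJn : ∀ u ∈ J, s • u - v ∈ rect n n) :
    IsFreeGrid X s (I ∪ J) := by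
  intro f
  obtain ⟨y, hy, hyf⟩ := hI f
  obtain ⟨z, hz, hzf⟩ := hJ f
  obtain ⟨x, hx, hxy, hxz⟩ := hglue n hn y (fun u => z (u + v)) (globallyValid_of_mem hy n)
    (globallyValid_of_mem (hinv v z hz) n) v hv
  refine ⟨x, hx, fun u hu => ?_⟩
  rcases hu with hu | hu
  · rw [← hyf u hu, ← hxy.eq_of_mem_rect (hIn u hu), Prod.mk_zero_zero, add_zero]
  · simpa only [sub_add_cancel, hzf u hu] using hxz.eq_of_mem_rect (hJn u hu)

theorem IsFreeGrid.rect_two_mul_left (hinv : IsShiftInvariant X) {C : ℕ}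
    (hglue : IsBlockGluing X C) {m : ℕ} (h : IsFreeGrid X (1 + C) (rect m m)) :
    IsFreeGrid X (1 + C) (rect (2 * m) m) := by
  rcases m with _ | k
  · simpa using h
  have hs : (0 : ℤ) ≤ 1 + C := by omega
  -- `(1 + C) * k + 1 = (1 + C) * m - C` is the side of the smallest window around a block.
  have := h.union hinv hglue (h.preimage_add hinv (-(k + 1 : ℤ), 0)) (n := (1 + C) * k + 1)
    (v := ((1 + C) * (k + 1), 0)) (by omega) (Or.inl ?_) ?_ ?_
  · convert this using 1
    ext ⟨i, j⟩
    simp only [rect, Set.mem_prod, Set.mem_Ico, Set.mem_union, Set.mem_preimage, Prod.mk_add_mk]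
    push_cast
    omega
  · push_cast
    rw [abs_of_nonneg (by positivity)]
    linarith
  all_goals
    rintro ⟨i, j⟩ hu
    simp only [rect, Set.mem_prod, Set.mem_Ico, Set.mem_preimage, Prod.smul_mk, smul_eq_mul,
      Prod.mk_add_mk, Prod.mk_sub_mk] at hu ⊢
    push_cast at hu ⊢
    refine ⟨⟨?_, ?_⟩, ?_, ?_⟩ <;> nlinarith

theorem IsFreeGrid.rect_two_mul_right (hinv : IsShiftInvariant X) {C : ℕ}
    (hglue : IsBlockGluing X C) {m : ℕ} (h : IsFreeGrid X (1 + C) (rect (2 * m) m)) :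
    IsFreeGrid X (1 + C) (rect (2 * m) (2 * m)) := by
  rcases m with _ | k
  · simpa using h
  have hs : (0 : ℤ) ≤ 1 + C := by omega
  -- The square window is taller than the rectangle, so the lower copy of the rectangle sits at
  -- the top of its own window, which lies a full window plus `C` below the first one.
  have := h.union hinv hglue (h.preimage_add hinv (0, k + 1)) (n := (1 + C) * (2 * k + 1) + 1)
    (v := (0, -(2 * (1 + C) * (k + 1)))) (by omega) (Or.inr ?_) ?_ ?_
  · convert this.preimage_add hinv (0, -(k + 1)) using 1
    ext ⟨i, j⟩
    simp only [rect, Set.mem_prod, Set.mem_Ico, Set.mem_union, Set.mem_preimage, Prod.mk_add_mk]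
    push_cast
    omega
  · push_cast
    rw [abs_neg, abs_of_nonneg (by positivity)]
    linarith
  all_goals
    rintro ⟨i, j⟩ hu
    simp only [rect, Set.mem_prod, Set.mem_Ico, Set.mem_preimage, Prod.smul_mk, smul_eq_mul,
      Prod.mk_add_mk, Prod.mk_sub_mk] at hu ⊢
    push_cast at hu ⊢
    refine ⟨⟨?_, ?_⟩, ?_, ?_⟩ <;> nlinarith

theorem card_symbols_pow_le_patternCount [Finite A] {s m : ℕ} (hs : 0 < s)
    (hX : (symbols X).Nonempty) (h : IsFreeGrid X s (rect m m)) :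
    Nat.card (symbols X) ^ (m * m) ≤ patternCount X (s * m) := by
  obtain ⟨a, ha⟩ := hX
  let e : Fin m × Fin m → ℤ × ℤ := fun ij => (ij.1, ij.2)
  have he : e.Injective := fun ij ij' h => by
    simp only [e, Prod.mk.injEq, Nat.cast_inj, Fin.val_inj] at h
    exact Prod.ext h.1 h.2
  have hrealize : ∀ g : Fin m × Fin m → symbols X, ∃ x ∈ X, ∀ ij, x ((s : ℤ) • e ij) = g ij := by
    intro g
    obtain ⟨x, hx, hxg⟩ := h (Function.extend e g fun _ => ⟨a, ha⟩)
    refine ⟨x, hx, fun ij => ?_⟩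
    rw [hxg _ (by simp [rect, e]), he.extend_apply]
  choose x hxX hxg using hrealize
  have hlt : ∀ i : Fin m, s * (i : ℕ) < s * m := fun i => Nat.mul_lt_mul_of_pos_left i.2 hs
  let F : (Fin m × Fin m → symbols X) →
      {p : Fin (s * m) × Fin (s * m) → A //
        ∃ x ∈ X, ∀ ij : Fin (s * m) × Fin (s * m), x ((ij.1 : ℤ), (ij.2 : ℤ)) = p ij} :=
    fun g => ⟨fun ij => x g (ij.1, ij.2), x g, hxX g, fun _ => rfl⟩
  have hF : F.Injective := by
    intro g g' hgg'
    funext ij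
    apply Subtype.ext
    have := congrFun (congrArg Subtype.val hgg') (⟨s * ij.1, hlt ij.1⟩, ⟨s * ij.2, hlt ij.2⟩)
    rw [← hxg g ij, ← hxg g' ij]
    simpa [F, e] using this
  calc Nat.card (symbols X) ^ (m * m) = Nat.card (Fin m × Fin m → symbols X) := by
        simp [Nat.card_fun]
    _ ≤ patternCount X (s * m) := Nat.card_le_card_of_injective F hF

theorem isFreeGrid_rect_two_pow (hinv : IsShiftInvariant X) {C : ℕ} (hglue : IsBlockGluing X C)
    (t : ℕ) : IsFreeGrid X (1 + C) (rect (2 ^ t) (2 ^ t)) := by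
  induction t with
  | zero => exact isFreeGrid_rect_one_one _
  | succ t ih =>
    rw [pow_succ']
    exact (ih.rect_two_mul_left hinv hglue).rect_two_mul_right hinv hglue

theorem logb_card_symbols_div_le_of_tendsto [Finite A] (hinv : IsShiftInvariant X) {C : ℕ}
    (hglue : IsBlockGluing X C) (hX : (symbols X).Nonempty) {h : ℝ}
    (hent : Tendsto (fun k : ℕ => Real.logb 2 (patternCount X k) / (k : ℝ) ^ 2) atTop (nhds h)) :
    Real.logb 2 (Nat.card (symbols X)) / ((1 : ℝ) + C) ^ 2 ≤ h := by
  have hmono : StrictMono fun t : ℕ => (1 + C) * 2 ^ t := fun _ _ hst =>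
    Nat.mul_lt_mul_of_pos_left (Nat.pow_lt_pow_right one_lt_two hst) (by omega)
  refine ge_of_tendsto' (hent.comp hmono.tendsto_atTop) fun t => ?_
  have hcount := card_symbols_pow_le_patternCount (s := 1 + C) (by omega) hX
    (by exact_mod_cast isFreeGrid_rect_two_pow hinv hglue t)
  have hcard : (0 : ℝ) < Nat.card (symbols X) := by
    have : Nonempty (symbols X) := hX.to_subtype
    exact_mod_cast Nat.card_pos
  simpa using logb_div_sq_le_of_pow_le hcard (by positivity) (Nat.two_pow_pos t)
    (by exact_mod_cast hcount)

end Subshift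

theorem constant_block_gluing_positive_entropy_general
    (A : Type) [Fintype A] (X : Set ((ℤ × ℤ) → A))
    (hinv : ∀ v : ℤ × ℤ, ∀ x ∈ X, (fun u => x (u + v)) ∈ X)
    (hsymb : ∃ a b : A, a ≠ b ∧ (∃ x ∈ X, x (0, 0) = a) ∧ (∃ x ∈ X, x (0, 0) = b))
    (C : ℕ)
    (hglue : ∀ n : ℕ, 1 ≤ n → ∀ p q : ℤ × ℤ → A,
      globallyValid X p n → globallyValid X q n →
      ∀ v : ℤ × ℤ, ((n : ℤ) + C ≤ |v.1| ∨ (n : ℤ) + C ≤ |v.2|) →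
        ∃ x ∈ X, containsAt x p n (0, 0) ∧ containsAt x q n v)
    (h : ℝ)
    (hent : Tendsto (fun k : ℕ => Real.logb 2 (patternCount X k) / (k : ℝ) ^ 2)
      atTop (nhds h)) :
    Real.logb 2 2 / ((1 : ℝ) + C) ^ 2 ≤ h := by
  obtain ⟨a, b, hab, ha, hb⟩ := hsymb
  have htwo : (2 : ℝ) ≤ Nat.card (symbols X) := by
    rw [Nat.card_coe_set_eq]
    exact_mod_cast (Set.one_lt_ncard_iff).2 ⟨a, b, ha, hb, hab⟩
  calc Real.logb 2 2 / ((1 : ℝ) + C) ^ 2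
      ≤ Real.logb 2 (Nat.card (symbols X)) / ((1 : ℝ) + C) ^ 2 := by
        gcongr
        norm_num
    _ ≤ h := logb_card_symbols_div_le_of_tendsto hinv hglue ⟨a, ha⟩ hent

theorem constant_block_gluing_positive_entropy
    (A : Type) [Fintype A] (X : Set ((ℤ × ℤ) → A)) (hne : X.Nonempty)
    (hinv : ∀ v : ℤ × ℤ, ∀ x ∈ X, (fun u => x (u + v)) ∈ X)
    (hsymb : ∃ a b : A, a ≠ b ∧ (∃ x ∈ X, x (0, 0) = a) ∧ (∃ x ∈ X, x (0, 0) = b))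
    (C : ℕ)
    (hglue : ∀ n : ℕ, 1 ≤ n → ∀ p q : ℤ × ℤ → A,
      globallyValid X p n → globallyValid X q n →
      ∀ v : ℤ × ℤ, ((n : ℤ) + C ≤ |v.1| ∨ (n : ℤ) + C ≤ |v.2|) →
        ∃ x ∈ X, containsAt x p n (0, 0) ∧ containsAt x q n v)
    (h : ℝ)
    (hent : Tendsto (fun k : ℕ => Real.logb 2 (patternCount X k) / (k : ℝ) ^ 2)
      atTop (nhds h)) :
    Real.logb 2 2 / ((1 : ℝ) + C) ^ 2 ≤ h :=
  constant_block_gluing_positive_entropy_general A X hinv hsymb C hglue h hent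
end
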